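/- In the bicategory of relations Bicat_P of an elementary existential doctrine P, every morphism R ∈ P(X×Y) is a lax comonoid homomorphism: R ; Δ_Y ≤ Δ_X ; (R ⊗ R) and R ; !_Y ≤ !_X, where Δ and ! are transported from C along the graph functor and the tensor of relations is R ⊗ S = P_{⟨π1,π3⟩}(R) ∧ P_{⟨π2,π4⟩}(S). -/

import Mathlib

open CategoryTheory CategoryTheory.Limits

universe v u w

/-- An elementary existential doctrine on a cartesian category `C`:
a contravariant functor into inf-semilattices with top, equipped with equality
predicates `δ`, and left adjoints to reindexing along both product projections,
satisfying Beck–Chevalley, Frobenius reciprocity and the elementarity condition. -/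
structure EED (C : Type u) [Category.{v} C] [HasFiniteProducts C] where
  obj : C → Type w
  semi : ∀ A : C, SemilatticeInf (obj A)
  otop : ∀ A : C, OrderTop (obj A)
  map : ∀ {A B : C}, (A ⟶ B) → obj B → obj A
  map_id : ∀ (A : C) (α : obj A), map (𝟙 A) α = α
  map_comp : ∀ {A B D : C} (f : A ⟶ B) (g : B ⟶ D) (α : obj D),
    map (f ≫ g) α = map f (map g α)
  map_inf : ∀ {A B : C} (f : A ⟶ B) (α β : obj B), map f (α ⊓ β) = map f α ⊓ map f β
  map_top : ∀ {A B : C} (f : A ⟶ B), map f (⊤ : obj B) = (⊤ : obj A)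
  /-- the equality predicate -/
  δ : ∀ A : C, obj (A ⨯ A)
  /-- existential quantification along the first projection (quantifying away the
  second factor) -/
  exFst : ∀ {X A : C}, obj (X ⨯ A) → obj X
  exFst_adj : ∀ {X A : C} (β : obj (X ⨯ A)) (α : obj X),
    exFst β ≤ α ↔ β ≤ map prod.fst α
  /-- existential quantification along the second projection -/
  exSnd : ∀ {X A : C}, obj (X ⨯ A) → obj A
  exSnd_adj : ∀ {X A : C} (β : obj (X ⨯ A)) (α : obj A),
    exSnd β ≤ α ↔ β ≤ map prod.snd α
  bcFst : ∀ {X X' A : C} (f : X' ⟶ X) (β : obj (X ⨯ A)),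
    exFst (map (prod.map f (𝟙 A)) β) = map f (exFst β)
  bcSnd : ∀ {X A A' : C} (f : A' ⟶ A) (β : obj (X ⨯ A)),
    exSnd (map (prod.map (𝟙 X) f) β) = map f (exSnd β)
  frobFst : ∀ {X A : C} (α : obj X) (β : obj (X ⨯ A)),
    exFst (map prod.fst α ⊓ β) = α ⊓ exFst β
  frobSnd : ∀ {X A : C} (α : obj A) (β : obj (X ⨯ A)),
    exSnd (map prod.snd α ⊓ β) = α ⊓ exSnd β
  /-- elementarity: `α ↦ P_{⟨π₁,π₂⟩}(α) ⊓ P_{⟨π₂,π₃⟩}(δ_A)` is left adjoint to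
  reindexing along `id_X × Δ_A`. -/
  elem : ∀ {X A : C} (α : obj (X ⨯ A)) (γ : obj (X ⨯ (A ⨯ A))),
    (map (prod.map (𝟙 X) prod.fst) α ⊓ map prod.snd (δ A) ≤ γ) ↔
      α ≤ map (prod.map (𝟙 X) (diag A)) γ

attribute [instance] EED.semi EED.otop

variable {C : Type u} [Category.{v} C] [HasFiniteProducts C]

namespace EED

/-- Composition in the bicategory of relations `Bicat_P`: realised using the
ambient object `(X ⨯ Z) ⨯ Y` and existential quantification of the middle factor. -/
noncomputable def rcomp (P : EED C) {X Y Z : C} (R : P.obj (X ⨯ Y)) (S : P.obj (Y ⨯ Z)) :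
    P.obj (X ⨯ Z) :=
  P.exFst (P.map (prod.lift (prod.fst ≫ prod.fst) prod.snd) R ⊓
    P.map (prod.lift prod.snd (prod.fst ≫ prod.snd)) S)

/-- The graph of a morphism of the base category. -/
noncomputable def graph (P : EED C) {X Y : C} (f : X ⟶ Y) : P.obj (X ⨯ Y) :=
  P.map (prod.map f (𝟙 Y)) (P.δ Y)

/-- Tensor product of relations in `Bicat_P`. -/
noncomputable def rtensor (P : EED C) {X Y X' Y' : C} (R : P.obj (X ⨯ Y)) (S : P.obj (X' ⨯ Y')) :
    P.obj ((X ⨯ X') ⨯ (Y ⨯ Y')) :=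
  P.map (prod.map prod.fst prod.fst) R ⊓ P.map (prod.map prod.snd prod.snd) S

end EED

/-! `R ; graph f` is the direct image of `R` along `𝟙 × f`, so it lies below every `T` whose
reindexing along `𝟙 × f` contains `R`; dually `graph f ; S` contains the reindexing of `S`
along `f × 𝟙`. Hence `R ; Δ_Y ≤ Δ_X ; (R ⊗ R)` reduces to `R ≤ (Δ_X × Δ_Y)^*(R ⊗ R) = R ⊓ R`.
The counit inequality is trivial because the graph of `X ⟶ ⊤_ C` is `⊤`. -/

namespace EED

variable (P : EED C)

theorem map_mono {A B : C} (f : A ⟶ B) : Monotone (P.map f) := fun α β h => by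
  rw [← inf_eq_left, ← P.map_inf, inf_eq_left.mpr h]

theorem le_exFst {W A : C} (u : W ⟶ A) (β : P.obj (W ⨯ A)) :
    P.map (prod.lift (𝟙 W) u) β ≤ P.exFst β := by
  have h := P.map_mono (prod.lift (𝟙 W) u) ((P.exFst_adj β _).mp le_rfl)
  rwa [← P.map_comp, prod.lift_fst, P.map_id] at h

theorem map_lift_self_δ {W A : C} (u : W ⟶ A) : P.map (prod.lift u u) (P.δ A) = ⊤ := by
  have h := P.map_mono (prod.lift (𝟙 W) u) ((P.elem ⊤ (P.map prod.snd (P.δ A))).mp inf_le_right)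
  rw [P.map_top, ← P.map_comp, ← P.map_comp] at h
  simpa only [top_le_iff, Category.assoc, prod.map_snd, prod.lift_snd_assoc, prod.comp_diag,
    prod.comp_lift, prod.lift_snd, Category.comp_id] using h

/-- The Leibniz rule: equal terms may be substituted in any predicate. -/
theorem map_lift_inf_δ_le {W X A : C} (g : W ⟶ X) (h k : W ⟶ A) (β : P.obj (X ⨯ A)) :
    P.map (prod.lift g h) β ⊓ P.map (prod.lift h k) (P.δ A) ≤ P.map (prod.lift g k) β := by
  have hβ : P.map (prod.map (𝟙 X) prod.fst) β ⊓ P.map prod.snd (P.δ A) ≤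
      P.map (prod.map (𝟙 X) prod.snd) β :=
    (P.elem β _).mpr (by
      rw [← P.map_comp, prod.map_map, Category.comp_id, prod.lift_snd, prod.map_id_id, P.map_id])
  have := P.map_mono (prod.lift g (prod.lift h k)) hβ
  simpa only [P.map_inf, ← P.map_comp, prod.lift_map, prod.lift_snd, prod.lift_fst,
    Category.comp_id] using this

theorem map_lift_graph {W X Y : C} (f : X ⟶ Y) (a : W ⟶ X) (b : W ⟶ Y) :
    P.map (prod.lift a b) (P.graph f) = P.map (prod.lift (a ≫ f) b) (P.δ Y) := by
  rw [graph, ← P.map_comp, prod.lift_map, Category.comp_id]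

theorem rcomp_graph_le {X Y Z : C} {f : Y ⟶ Z} {R : P.obj (X ⨯ Y)} {T : P.obj (X ⨯ Z)}
    (h : R ≤ P.map (prod.map (𝟙 X) f) T) : P.rcomp R (P.graph f) ≤ T := by
  rw [rcomp, P.exFst_adj, map_lift_graph]
  have hR := P.map_mono (prod.lift (prod.fst ≫ prod.fst) prod.snd : (X ⨯ Z) ⨯ Y ⟶ X ⨯ Y) h
  rw [← P.map_comp, prod.lift_map, Category.comp_id] at hR
  calc _ ≤ _ ⊓ _ := inf_le_inf_right _ hR
    _ ≤ _ := P.map_lift_inf_δ_le _ _ _ T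
    _ = P.map prod.fst T := by rw [← prod.comp_lift, prod.lift_fst_snd, Category.comp_id]

theorem map_prod_map_le_rcomp_graph {X Y Z : C} (f : X ⟶ Y) (S : P.obj (Y ⨯ Z)) :
    P.map (prod.map f (𝟙 Z)) S ≤ P.rcomp (P.graph f) S := by
  refine le_trans ?_ (P.le_exFst (prod.fst ≫ f) _)
  have hgraph :
      prod.lift (𝟙 (X ⨯ Z)) (prod.fst ≫ f) ≫ prod.lift (prod.fst ≫ prod.fst) prod.snd =
        prod.lift prod.fst (prod.fst ≫ f) := by
    simp only [prod.comp_lift, prod.lift_fst_assoc, prod.lift_snd, Category.id_comp]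
  have hS : prod.lift (𝟙 (X ⨯ Z)) (prod.fst ≫ f) ≫ prod.lift prod.snd (prod.fst ≫ prod.snd) =
      prod.map f (𝟙 Z) := by
    rw [← prod.lift_fst_comp_snd_comp, prod.comp_lift, prod.lift_fst_assoc, prod.lift_snd,
      Category.id_comp, Category.comp_id]
  rw [P.map_inf, ← P.map_comp, ← P.map_comp, hgraph, hS, map_lift_graph, map_lift_self_δ,
    top_inf_eq]

theorem map_prod_map_diag_rtensor {X Y : C} (R S : P.obj (X ⨯ Y)) :
    P.map (prod.map (diag X) (diag Y)) (P.rtensor R S) = R ⊓ S := by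
  simp only [rtensor, P.map_inf, ← P.map_comp, prod.map_map, prod.lift_fst, prod.lift_snd,
    prod.map_id_id, P.map_id]

theorem graph_terminal_from (X : C) : P.graph (terminal.from X) = ⊤ := by
  have h : prod.map (terminal.from X) (𝟙 (⊤_ C)) = prod.lift (terminal.from _) (terminal.from _) :=
    prod.hom_ext (Subsingleton.elim _ _) (Subsingleton.elim _ _)
  rw [graph, h, map_lift_self_δ]

end EED

/-- In `Bicat_P`, every relation `R ∈ P(X ⨯ Y)` is a lax comonoid homomorphism
with respect to the comonoids transported from `C` along the graph functor:
`R ; Δ_Y ≤ Δ_X ; (R ⊗ R)` and `R ; !_Y ≤ !_X`. -/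
theorem every_relation_lax_comonoid_hom (P : EED C) {X Y : C} (R : P.obj (X ⨯ Y)) :
    P.rcomp R (P.graph (diag Y)) ≤
      P.rcomp (P.graph (diag X)) (P.rtensor R R) ∧
    P.rcomp R (P.graph (terminal.from Y)) ≤ P.graph (terminal.from X) := by
  refine ⟨P.rcomp_graph_le ?_, P.graph_terminal_from X ▸ le_top⟩
  calc R = P.map (prod.map (diag X) (diag Y)) (P.rtensor R R) := by
        rw [P.map_prod_map_diag_rtensor, inf_idem]
    _ = P.map (prod.map (𝟙 X) (diag Y)) (P.map (prod.map (diag X) (𝟙 _)) (P.rtensor R R)) := by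
        rw [← P.map_comp, prod.map_map, Category.id_comp, Category.comp_id]
    _ ≤ _ := P.map_mono _ (P.map_prod_map_le_rcomp_graph _ _)
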